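/- Let b ∈ ℝ. For ν = (ν₁,ν₂,ν₃,ν₄) ∈ ℝ⁴ let A_ν be the 4×4 complex matrix with rows (0, ν₁−iν₃, 0, −ν₂−i(1+b)ν₄), (ν₁+iν₃, 0, ν₂+iν₄, 0), (0, ν₂−iν₄, 0, ν₁+iν₃), (−ν₂+i(1+b)ν₄, 0, ν₁−iν₃, 0), and set Λ_± = ν₁² + ν₂² + ν₃² + ((b²+2b+2)/2)·ν₄² ± |ν₄|·|b|·√( ((b+2)²·ν₄²)/4 + ν₁² + ν₃² ). Then A_ν is Hermitian and for every ν ∈ ℝ⁴ and every λ ∈ ℂ, det(A_ν − λ·I₄) = (λ² − Λ₊)·(λ² − Λ₋); in particular the eigenvalues of A_ν, counted with multiplicity, are √Λ₊, √Λ₋, −√Λ₊, −√Λ₋. -/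
import Mathlib
set_option maxHeartbeats 2000000



open Matrix

/-- The perturbed Levi-form matrix `A_ν` of Example 12.5 of the paper, for a real parameter `b`
and `ν = (ν₁,ν₂,ν₃,ν₄) ∈ ℝ⁴`. -/
noncomputable def ALeviPert (b : ℝ) (ν : Fin 4 → ℝ) : Matrix (Fin 4) (Fin 4) ℂ :=
  !![0, (ν 0 : ℂ) - Complex.I * (ν 2 : ℂ), 0, -(ν 1 : ℂ) - Complex.I * ((1 + b) * ν 3 : ℝ);
     (ν 0 : ℂ) + Complex.I * (ν 2 : ℂ), 0, (ν 1 : ℂ) + Complex.I * (ν 3 : ℂ), 0;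
     0, (ν 1 : ℂ) - Complex.I * (ν 3 : ℂ), 0, (ν 0 : ℂ) + Complex.I * (ν 2 : ℂ);
     -(ν 1 : ℂ) + Complex.I * ((1 + b) * ν 3 : ℝ), 0, (ν 0 : ℂ) - Complex.I * (ν 2 : ℂ), 0]

/-- The quantities `Λ₊` (for `sign = 1`) and `Λ₋` (for `sign = -1`) of Example 12.5. -/
noncomputable def LambdaPM (b : ℝ) (ν : Fin 4 → ℝ) (sign : ℝ) : ℝ :=
  ν 0 ^ 2 + ν 1 ^ 2 + ν 2 ^ 2 + (b ^ 2 + 2 * b + 2) / 2 * ν 3 ^ 2 +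
    sign * (|ν 3| * |b| * Real.sqrt ((b + 2) ^ 2 * ν 3 ^ 2 / 4 + ν 0 ^ 2 + ν 2 ^ 2))

set_option maxHeartbeats 2000000 in
lemma herm19 (b : ℝ) (ν : Fin 4 → ℝ) : (ALeviPert b ν).IsHermitian := by
  rw [Matrix.IsHermitian]
  ext i j
  fin_cases i <;> fin_cases j <;>
    simp [ALeviPert, Matrix.conjTranspose_apply, Complex.ext_iff]

lemma det19 (b : ℝ) (ν : Fin 4 → ℝ) (l : ℂ) (S P : ℝ)
    (hS : S = 2*(ν 0^2 + ν 1^2 + ν 2^2) + (b^2+2*b+2)*ν 3^2)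
    (hP : P = (ν 0^2 + ν 1^2 + ν 2^2 + (b^2+2*b+2)/2*ν 3^2)^2
        - ν 3^2*b^2*((b+2)^2*ν 3^2/4 + ν 0^2 + ν 2^2)) :
    (ALeviPert b ν - l • (1 : Matrix (Fin 4) (Fin 4) ℂ)).det = l^4 - (S:ℂ)*l^2 + (P:ℂ) := by
  subst hS hP
  simp only [ALeviPert, Matrix.det_succ_row_zero, Fin.sum_univ_succ, Matrix.sub_apply,
    Matrix.smul_apply, Matrix.one_apply, Fin.succAbove, Matrix.cons_val', Matrix.cons_val_zero,
    Matrix.cons_val_one, Matrix.head_cons, Matrix.head_fin_const, Matrix.cons_val_fin_one,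
    Matrix.empty_val', Fin.sum_univ_zero, Matrix.submatrix_apply, Matrix.det_fin_one,
    Matrix.det_unique]
  norm_num [Fin.succ, Fin.lt_def, Fin.castSucc, Fin.castAdd, Fin.castLE]
  push_cast
  ring_nf
  simp only [show (Complex.I)^4 = 1 by rw [show (4:ℕ)=2*2 from rfl, pow_mul, Complex.I_sq]; ring,
    Complex.I_sq]
  ring


/-- (Example 12.5 of the paper.)  The matrix `A_ν` above is Hermitian and its
characteristic polynomial is `det(A_ν − λI₄) = (λ² − Λ₊)(λ² − Λ₋)`; in particular its
eigenvalues, counted with multiplicity, are `√Λ₊, √Λ₋, −√Λ₊, −√Λ₋`, i.e.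
`det(A_ν − λI₄) = (λ − √Λ₊)(λ + √Λ₊)(λ − √Λ₋)(λ + √Λ₋)`. -/
theorem statement_19 (b : ℝ) (ν : Fin 4 → ℝ) :
    (ALeviPert b ν).IsHermitian ∧
    (∀ l : ℂ, (ALeviPert b ν - l • (1 : Matrix (Fin 4) (Fin 4) ℂ)).det =
      (l ^ 2 - ((LambdaPM b ν 1 : ℝ) : ℂ)) * (l ^ 2 - ((LambdaPM b ν (-1) : ℝ) : ℂ))) ∧
    (∀ l : ℂ, (ALeviPert b ν - l • (1 : Matrix (Fin 4) (Fin 4) ℂ)).det =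
      (l - ((Real.sqrt (LambdaPM b ν 1) : ℝ) : ℂ)) * (l + ((Real.sqrt (LambdaPM b ν 1) : ℝ) : ℂ)) *
        ((l - ((Real.sqrt (LambdaPM b ν (-1)) : ℝ) : ℂ)) *
          (l + ((Real.sqrt (LambdaPM b ν (-1)) : ℝ) : ℂ)))) := by
  set Q : ℝ := (b + 2) ^ 2 * ν 3 ^ 2 / 4 + ν 0 ^ 2 + ν 2 ^ 2 with hQdef
  have hQ : 0 ≤ Q := by positivity
  set X : ℝ := |ν 3| * |b| * Real.sqrt Q with hXdef
  have hX : 0 ≤ X := by positivity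
  have hX2 : X ^ 2 = ν 3 ^ 2 * b ^ 2 * Q := by
    rw [hXdef, mul_pow, mul_pow, sq_abs, sq_abs, Real.sq_sqrt hQ]
  set A : ℝ := ν 0 ^ 2 + ν 1 ^ 2 + ν 2 ^ 2 + (b ^ 2 + 2 * b + 2) / 2 * ν 3 ^ 2 with hAdef
  have hA : 0 ≤ A := by rw [hAdef]; nlinarith [sq_nonneg (b+1), sq_nonneg (ν 3), sq_nonneg ((b+1)*ν 3)]
  have hLp : LambdaPM b ν 1 = A + X := by rw [LambdaPM]; ring
  have hLm : LambdaPM b ν (-1) = A - X := by rw [LambdaPM]; ring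
  have hsq : X ^ 2 ≤ A ^ 2 := by
    rw [hX2, hQdef, hAdef]
    nlinarith [sq_nonneg (ν 0^2 + ν 2^2 + (b+1)*ν 3^2), sq_nonneg (ν 1^2),
      mul_nonneg (add_nonneg (sq_nonneg (ν 0)) (sq_nonneg (ν 2))) (sq_nonneg (ν 1)),
      sq_nonneg ((b+1)*ν 1*ν 3), mul_nonneg (sq_nonneg (ν 1)) (sq_nonneg (ν 3))]
  have hXA : X ≤ A := by
    calc X = Real.sqrt (X^2) := (Real.sqrt_sq hX).symm
    _ ≤ Real.sqrt (A^2) := Real.sqrt_le_sqrt hsq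
    _ = A := Real.sqrt_sq hA
  have hLpn : 0 ≤ LambdaPM b ν 1 := by rw [hLp]; linarith
  have hLmn : 0 ≤ LambdaPM b ν (-1) := by rw [hLm]; linarith
  have key : ∀ l : ℂ, (ALeviPert b ν - l • (1 : Matrix (Fin 4) (Fin 4) ℂ)).det =
      (l ^ 2 - ((LambdaPM b ν 1 : ℝ) : ℂ)) * (l ^ 2 - ((LambdaPM b ν (-1) : ℝ) : ℂ)) := by
    intro l
    rw [det19 b ν l (LambdaPM b ν 1 + LambdaPM b ν (-1)) (LambdaPM b ν 1 * LambdaPM b ν (-1))]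
    · push_cast; ring
    · rw [hLp, hLm, hAdef]; ring
    · rw [hLp, hLm]
      have : (A + X) * (A - X) = A^2 - X^2 := by ring
      rw [this, hX2, hAdef, hQdef]
  refine ⟨herm19 b ν, key, fun l => ?_⟩
  rw [key l]
  have e1 : ((LambdaPM b ν 1 : ℝ) : ℂ) = ((Real.sqrt (LambdaPM b ν 1) : ℝ) : ℂ)^2 := by
    rw [show ((Real.sqrt (LambdaPM b ν 1) : ℝ) : ℂ)^2
        = ((Real.sqrt (LambdaPM b ν 1)^2 : ℝ) : ℂ) by push_cast; ring, Real.sq_sqrt hLpn]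
  have e2 : ((LambdaPM b ν (-1) : ℝ) : ℂ) = ((Real.sqrt (LambdaPM b ν (-1)) : ℝ) : ℂ)^2 := by
    rw [show ((Real.sqrt (LambdaPM b ν (-1)) : ℝ) : ℂ)^2
        = ((Real.sqrt (LambdaPM b ν (-1))^2 : ℝ) : ℂ) by push_cast; ring, Real.sq_sqrt hLmn]
  rw [e1, e2]; ring
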